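/- Let G be a nonempty bounded open subset of ℂⁿ and let z ∈ G. For t > 0 define S_t(z) = sup { |f(z)|² : f holomorphic on G and ∫_G |f(w)|² e^{−t‖w‖} dV(w) ≤ 1 }. Then S_t(z)^{1/t} → e^{‖z‖} as t → ∞. -/

import Mathlib

/-!
For the lower bound, a Hahn–Banach functional `g` with `‖g‖ ≤ 1` and `g z = ‖z‖` gives the
test function `f w = c · exp ((t/2) g w)`, with `∫_G |f|² e^{-t‖w‖} ≤ c² vol G` while
`|f z|² = c² e^{t‖z‖}`; hence `S_t(z) ≥ e^{t‖z‖} / vol G`. For the upper bound, the sub-mean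
value property of `|f|² = |f²|` on a small polydisc `P ⊆ G ∩ B(z, δ)` together with
`e^{-t‖w‖} ≥ e^{-t(‖z‖+δ)}` on `P` gives `S_t(z) ≤ C_δ e^{t(‖z‖+δ)}`. Taking `t`-th roots, both
constants disappear in the limit.
-/

open MeasureTheory Metric Filter

noncomputable instance (n : ℕ) : MeasureSpace (EuclideanSpace ℂ (Fin n)) :=
  { volume := Measure.map (WithLp.toLp 2) (volume : Measure (Fin n → ℂ)) }

open Real Set Topology

theorem setLIntegral_Ioo_zero_ofReal {ρ : ℝ} (hρ : 0 ≤ ρ) :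
    ∫⁻ r in Ioo 0 ρ, ENNReal.ofReal r = ENNReal.ofReal (ρ ^ 2 / 2) := by
  rw [← ofReal_integral_eq_lintegral_ofReal, ← integral_Ioc_eq_integral_Ioo,
    ← intervalIntegral.integral_of_le hρ, integral_id]
  · ring_nf
  · exact continuous_id.integrableOn_Icc.mono_set Ioo_subset_Icc_self
  · exact (ae_restrict_iff' measurableSet_Ioo).2 (.of_forall fun r hr ↦ hr.1.le)


theorem two_pi_mul_enorm_le_setLIntegral_circleMap {g : ℂ → ℂ} {c : ℂ} {r : ℝ} (hr : 0 ≤ r)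
    (hg : DiffContOnCl ℂ g (ball c r)) :
    ENNReal.ofReal (2 * π) * ‖g c‖ₑ ≤ ∫⁻ θ in Ioo (-π) π, ‖g (circleMap c r θ)‖ₑ := by
  have hperiod : ∫ θ in (-π)..π, g (circleMap c r θ) = ∫ θ in 0..2 * π, g (circleMap c r θ) := by
    have hperiodic : (fun θ ↦ g (circleMap c r θ)).Periodic (2 * π) :=
      fun θ ↦ by simp [periodic_circleMap c r θ]
    simpa [show -π + 2 * π = π by ring] using hperiodic.intervalIntegral_add_eq (-π) 0
  have hmean : (2 * π : ℝ) • g c = ∫ θ in Ioo (-π) π, g (circleMap c r θ) := by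
    rw [← abs_of_nonneg hr] at hg
    rw [← integral_Ioc_eq_integral_Ioo, ← intervalIntegral.integral_of_le (by linarith [pi_pos]),
      hperiod, ← hg.circleAverage, circleAverage_def, smul_smul,
      mul_inv_cancel₀ (by positivity), one_smul]
  calc ENNReal.ofReal (2 * π) * ‖g c‖ₑ = ‖(2 * π : ℝ) • g c‖ₑ := by
        rw [enorm_smul, Real.enorm_of_nonneg (by positivity)]
    _ ≤ _ := hmean ▸ enorm_integral_le_lintegral_enorm _

theorem pi_mul_sq_mul_enorm_le_setLIntegral_ball {g : ℂ → ℂ} {c : ℂ} {ρ : ℝ} (hρ : 0 ≤ ρ)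
    (hg : DifferentiableOn ℂ g (ball c ρ)) :
    ENNReal.ofReal (π * ρ ^ 2) * ‖g c‖ₑ ≤ ∫⁻ y in ball c ρ, ‖g y‖ₑ := by
  set F : ℂ → ENNReal := (ball c ρ).indicator (‖g ·‖ₑ)
  set D : Set (ℝ × ℝ) := Ioo 0 ρ ×ˢ Ioo (-π) π
  have hD : D ⊆ polarCoord.target := by
    rw [polarCoord_target]; exact prod_mono Ioo_subset_Ioi_self subset_rfl
  have hmaps : MapsTo (fun p : ℝ × ℝ ↦ circleMap c p.1 p.2) D (ball c ρ) := by
    rintro ⟨r, θ⟩ ⟨hr, -⟩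
    rw [mem_ball, dist_eq_norm, circleMap_sub_center, norm_circleMap_zero, abs_of_pos hr.1]
    exact hr.2
  have hpolar : ∀ p ∈ D, ENNReal.ofReal p.1 • F (c + Complex.polarCoord.symm p) =
      ENNReal.ofReal p.1 * ‖g (circleMap c p.1 p.2)‖ₑ := by
    rintro ⟨r, θ⟩ hp
    have hcircle : c + Complex.polarCoord.symm (r, θ) = circleMap c r θ := by
      simp [circleMap, Complex.polarCoord_symm_apply, Complex.exp_mul_I]
    simp only [hcircle, F, indicator_of_mem (hmaps hp), smul_eq_mul]
  have hmeas : AEMeasurable (fun p : ℝ × ℝ ↦ ENNReal.ofReal p.1 * ‖g (circleMap c p.1 p.2)‖ₑ)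
      (volume.restrict D) :=
    measurable_fst.ennreal_ofReal.aemeasurable.mul
      ((hg.continuousOn.comp (by fun_prop) hmaps).aemeasurable
        (measurableSet_Ioo.prod measurableSet_Ioo)).enorm
  calc ENNReal.ofReal (π * ρ ^ 2) * ‖g c‖ₑ
      = ∫⁻ r in Ioo 0 ρ, ENNReal.ofReal r * (ENNReal.ofReal (2 * π) * ‖g c‖ₑ) := by
        rw [lintegral_mul_const _ ENNReal.measurable_ofReal, setLIntegral_Ioo_zero_ofReal hρ,
          ← mul_assoc, ← ENNReal.ofReal_mul (by positivity)]
        ring_nf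
    _ ≤ ∫⁻ r in Ioo 0 ρ, ∫⁻ θ in Ioo (-π) π, ENNReal.ofReal r * ‖g (circleMap c r θ)‖ₑ := by
        refine setLIntegral_mono' measurableSet_Ioo fun r hr ↦ ?_
        rw [lintegral_const_mul' _ _ ENNReal.ofReal_ne_top]
        gcongr
        exact two_pi_mul_enorm_le_setLIntegral_circleMap hr.1.le
          (hg.diffContOnCl_ball (closedBall_subset_ball hr.2))
    _ = ∫⁻ p in D, ENNReal.ofReal p.1 * ‖g (circleMap c p.1 p.2)‖ₑ := by
        rw [Measure.volume_eq_prod, setLIntegral_prod _ hmeas]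
    _ = ∫⁻ p in D, ENNReal.ofReal p.1 • F (c + Complex.polarCoord.symm p) :=
        (setLIntegral_congr_fun (measurableSet_Ioo.prod measurableSet_Ioo) hpolar).symm
    _ ≤ ∫⁻ p in polarCoord.target, ENNReal.ofReal p.1 • F (c + Complex.polarCoord.symm p) :=
        lintegral_mono_set hD
    _ = ∫⁻ y, F y := by
        rw [Complex.lintegral_comp_polarCoord_symm (fun y ↦ F (c + y)), lintegral_add_left_eq_self]
    _ = ∫⁻ y in ball c ρ, ‖g y‖ₑ := lintegral_indicator measurableSet_ball _

theorem Function.update_mem_ball {ι : Type*} [Fintype ι] [DecidableEq ι] {X : ι → Type*}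
    [∀ i, PseudoMetricSpace (X i)] {x c : ∀ i, X i} {ρ : ℝ} (hρ : 0 < ρ) (hx : x ∈ ball c ρ)
    {j : ι} {y : X j} (hy : y ∈ ball (c j) ρ) : Function.update x j y ∈ ball c ρ := by
  rw [ball_pi _ hρ] at hx ⊢
  exact (update_mem_pi_iff_of_mem hx).2 fun _ ↦ hy

section Polydisc

variable {ι : Type*} [Fintype ι] {f : (ι → ℂ) → ℂ} {c : ι → ℂ} {ρ : ℝ}

theorem pi_mul_sq_mul_enorm_le_setLIntegral_update [DecidableEq ι] (hρ : 0 < ρ)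
    (hf : DifferentiableOn ℂ f (ball c ρ)) {x : ι → ℂ} (hx : x ∈ ball c ρ) {j : ι}
    (hxj : x j = c j) :
    ENNReal.ofReal (π * ρ ^ 2) * ‖f x‖ₑ ≤ ∫⁻ y in ball (c j) ρ, ‖f (Function.update x j y)‖ₑ := by
  have hslice : DifferentiableOn ℂ (fun y ↦ f (Function.update x j y)) (ball (c j) ρ) :=
    hf.comp (fun y _ ↦ (hasFDerivAt_update x y).differentiableAt.differentiableWithinAt)
      fun _ ↦ Function.update_mem_ball hρ hx
  simpa [← hxj] using pi_mul_sq_mul_enorm_le_setLIntegral_ball hρ.le hslice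

theorem pi_mul_sq_pow_mul_enorm_le_lmarginal [DecidableEq ι] (hρ : 0 < ρ)
    (hf : DifferentiableOn ℂ f (ball c ρ)) (s : Finset ι) {x : ι → ℂ} (hx : x ∈ ball c ρ)
    (hxs : ∀ i ∈ s, x i = c i) :
    ENNReal.ofReal ((π * ρ ^ 2) ^ s.card) * ‖f x‖ₑ ≤
      (∫⋯∫⁻_s, (ball c ρ).indicator (‖f ·‖ₑ) ∂fun _ ↦ volume) x := by
  have hmeas : Measurable ((ball c ρ).indicator (‖f ·‖ₑ)) := by
    classical
    rw [← piecewise_eq_indicator]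
    exact hf.continuousOn.enorm.measurable_piecewise continuousOn_const measurableSet_ball
  induction s using Finset.induction_on generalizing x with
  | empty => simp [indicator_of_mem hx]
  | @insert j s hj ih =>
    calc ENNReal.ofReal ((π * ρ ^ 2) ^ (insert j s).card) * ‖f x‖ₑ
        = ENNReal.ofReal ((π * ρ ^ 2) ^ s.card) * (ENNReal.ofReal (π * ρ ^ 2) * ‖f x‖ₑ) := by
          rw [Finset.card_insert_of_notMem hj, pow_succ, ENNReal.ofReal_mul (by positivity),
            mul_assoc]
      _ ≤ ENNReal.ofReal ((π * ρ ^ 2) ^ s.card) *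
            ∫⁻ y in ball (c j) ρ, ‖f (Function.update x j y)‖ₑ := by
          gcongr
          exact pi_mul_sq_mul_enorm_le_setLIntegral_update hρ hf hx
            (hxs j (Finset.mem_insert_self j s))
      _ = ∫⁻ y in ball (c j) ρ,
            ENNReal.ofReal ((π * ρ ^ 2) ^ s.card) * ‖f (Function.update x j y)‖ₑ :=
          (lintegral_const_mul' _ _ ENNReal.ofReal_ne_top).symm
      _ ≤ ∫⁻ y in ball (c j) ρ,
            (∫⋯∫⁻_s, (ball c ρ).indicator (‖f ·‖ₑ) ∂fun _ ↦ volume) (Function.update x j y) := by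
          refine setLIntegral_mono' measurableSet_ball fun y hy ↦
            ih (Function.update_mem_ball hρ hx hy) fun i hi ↦ ?_
          rw [Function.update_of_ne (ne_of_mem_of_not_mem hi hj)]
          exact hxs i (Finset.mem_insert_of_mem hi)
      _ ≤ _ := by
          rw [lmarginal_insert _ hmeas hj]
          exact setLIntegral_le_lintegral _ _

theorem pi_mul_sq_pow_card_mul_enorm_le_setLIntegral_ball (hρ : 0 < ρ)
    (hf : DifferentiableOn ℂ f (ball c ρ)) :
    ENNReal.ofReal ((π * ρ ^ 2) ^ Fintype.card ι) * ‖f c‖ₑ ≤ ∫⁻ x in ball c ρ, ‖f x‖ₑ := by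
  classical
  simpa [lintegral_indicator measurableSet_ball, ← volume_pi] using
    pi_mul_sq_pow_mul_enorm_le_lmarginal hρ hf Finset.univ (mem_ball_self hρ) fun _ _ ↦ rfl

theorem exists_enorm_sq_le_mul_setLIntegral {U : Set (ι → ℂ)} (hU : IsOpen U) (hc : c ∈ U) :
    ∃ C : ℝ, 0 < C ∧ ∀ f : (ι → ℂ) → ℂ, DifferentiableOn ℂ f U →
      ‖f c‖ₑ ^ 2 ≤ ENNReal.ofReal C * ∫⁻ x in U, ‖f x‖ₑ ^ 2 := by
  obtain ⟨ρ, hρ, hball⟩ := isOpen_iff.1 hU c hc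
  have hvol : 0 < (π * ρ ^ 2) ^ Fintype.card ι := by positivity
  refine ⟨((π * ρ ^ 2) ^ Fintype.card ι)⁻¹, inv_pos.2 hvol, fun f hf ↦ ?_⟩
  have hmean := pi_mul_sq_pow_card_mul_enorm_le_setLIntegral_ball hρ ((hf.pow 2).mono hball)
  simp only [Pi.pow_apply, enorm_pow] at hmean
  calc ‖f c‖ₑ ^ 2
      = ENNReal.ofReal ((π * ρ ^ 2) ^ Fintype.card ι)⁻¹ *
          (ENNReal.ofReal ((π * ρ ^ 2) ^ Fintype.card ι) * ‖f c‖ₑ ^ 2) := by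
        rw [← mul_assoc, ← ENNReal.ofReal_mul (inv_nonneg.2 hvol.le), inv_mul_cancel₀ hvol.ne',
          ENNReal.ofReal_one, one_mul]
    _ ≤ ENNReal.ofReal ((π * ρ ^ 2) ^ Fintype.card ι)⁻¹ * ∫⁻ x in U, ‖f x‖ₑ ^ 2 := by
        gcongr
        exact hmean.trans (lintegral_mono_set hball)

end Polydisc

instance (n : ℕ) : (volume : Measure (EuclideanSpace ℂ (Fin n))).IsAddHaarMeasure :=
  (PiLp.continuousLinearEquiv 2 ℂ fun _ : Fin n ↦ ℂ).symm.isAddHaarMeasure_map volume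

theorem EuclideanSpace.measurePreserving_toLp (n : ℕ) :
    MeasurePreserving (WithLp.toLp 2 : (Fin n → ℂ) → EuclideanSpace ℂ (Fin n)) :=
  ⟨(PiLp.continuous_toLp 2 _).measurable, rfl⟩

theorem EuclideanSpace.exists_enorm_sq_le_mul_setLIntegral {n : ℕ}
    {U : Set (EuclideanSpace ℂ (Fin n))} (hU : IsOpen U) {z : EuclideanSpace ℂ (Fin n)}
    (hz : z ∈ U) :
    ∃ C : ℝ, 0 < C ∧ ∀ f : EuclideanSpace ℂ (Fin n) → ℂ, DifferentiableOn ℂ f U →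
      ‖f z‖ₑ ^ 2 ≤ ENNReal.ofReal C * ∫⁻ w in U, ‖f w‖ₑ ^ 2 := by
  obtain ⟨C, hC, hbound⟩ := _root_.exists_enorm_sq_le_mul_setLIntegral
    (hU.preimage (PiLp.continuous_toLp 2 _)) (c := WithLp.ofLp z) hz
  refine ⟨C, hC, fun f hf ↦ ?_⟩
  rw [← (EuclideanSpace.measurePreserving_toLp n).setLIntegral_comp_preimage_emb
    (MeasurableEquiv.toLp 2 _).measurableEmbedding]
  exact hbound _ (hf.comp (PiLp.contDiff_toLp (n := 1)).differentiable_one.differentiableOn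
    fun _ ↦ id)

def weightedBergmanValues {E : Type*} [NormedAddCommGroup E] [NormedSpace ℂ E] [MeasureSpace E]
    (G : Set E) (t : ℝ) (z : E) : Set ℝ :=
  {s : ℝ | ∃ f : E → ℂ, DifferentiableOn ℂ f G ∧
    (∫⁻ w in G, (‖f w‖₊ : ENNReal) ^ 2 * ENNReal.ofReal (Real.exp (-t * ‖w‖))) ≤ 1 ∧
    s = ‖f z‖ ^ 2}

theorem inv_volume_mul_exp_mem_weightedBergmanValues {E : Type*} [NormedAddCommGroup E]
    [NormedSpace ℂ E] [MeasureSpace E] {G : Set E} (h0 : volume G ≠ 0) (htop : volume G ≠ ⊤)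
    {t : ℝ} (ht : 0 ≤ t) (z : E) :
    (volume G).toReal⁻¹ * exp (t * ‖z‖) ∈ weightedBergmanValues G t z := by
  set a := (volume G).toReal⁻¹
  have ha : 0 < a := inv_pos.2 (ENNReal.toReal_pos h0 htop)
  obtain ⟨g, hg, hgz⟩ := exists_dual_vector'' ℂ z
  have hre : ∀ w, (g w).re ≤ ‖w‖ := fun w ↦
    (Complex.re_le_norm _).trans ((g.le_opNorm w).trans (mul_le_of_le_one_left (norm_nonneg w) hg))
  set f : E → ℂ := fun w ↦ (√a : ℂ) * Complex.exp ((t / 2 : ℝ) * g w)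
  have hnorm : ∀ w, ‖f w‖ ^ 2 = a * exp (t * (g w).re) := fun w ↦ by
    rw [norm_mul, Complex.norm_exp, Complex.re_ofReal_mul, Complex.norm_real,
      norm_of_nonneg (sqrt_nonneg a), mul_pow, sq_sqrt ha.le, ← exp_nat_mul]
    ring_nf
  refine ⟨f, by fun_prop, ?_, by simp [hnorm, hgz]⟩
  have hweight :
      ∀ w, (‖f w‖₊ : ENNReal) ^ 2 * ENNReal.ofReal (exp (-t * ‖w‖)) ≤ ENNReal.ofReal a := by
    intro w
    rw [← enorm_eq_nnnorm, ← ofReal_norm, ← ENNReal.ofReal_pow (norm_nonneg _),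
      ← ENNReal.ofReal_mul (by positivity), hnorm, mul_assoc, ← exp_add]
    refine ENNReal.ofReal_le_ofReal (mul_le_of_le_one_right ha.le (exp_le_one_iff.2 ?_))
    nlinarith [hre w]
  calc ∫⁻ w in G, (‖f w‖₊ : ENNReal) ^ 2 * ENNReal.ofReal (exp (-t * ‖w‖))
      ≤ ∫⁻ _ in G, ENNReal.ofReal a := lintegral_mono hweight
    _ = 1 := by
      rw [setLIntegral_const, ENNReal.ofReal_inv_of_pos (ENNReal.toReal_pos h0 htop),
        ENNReal.ofReal_toReal htop, ENNReal.inv_mul_cancel h0 htop]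

theorem exists_forall_mem_weightedBergmanValues_le {n : ℕ} {G : Set (EuclideanSpace ℂ (Fin n))}
    (hG : IsOpen G) {z : EuclideanSpace ℂ (Fin n)} (hz : z ∈ G) {δ : ℝ} (hδ : 0 < δ) :
    ∃ C : ℝ, 0 < C ∧ ∀ t ≥ 0, ∀ s ∈ weightedBergmanValues G t z, s ≤ C * exp (t * (‖z‖ + δ)) := by
  obtain ⟨C, hC, hbound⟩ :=
    EuclideanSpace.exists_enorm_sq_le_mul_setLIntegral (hG.inter isOpen_ball) ⟨hz, mem_ball_self hδ⟩
  refine ⟨C, hC, ?_⟩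
  rintro t ht _ ⟨f, hf, hint, rfl⟩
  set M := ENNReal.ofReal (exp (t * (‖z‖ + δ)))
  have hweight : ∀ w ∈ G ∩ ball z δ,
      ‖f w‖ₑ ^ 2 ≤ M * ((‖f w‖₊ : ENNReal) ^ 2 * ENNReal.ofReal (exp (-t * ‖w‖))) := by
    rintro w ⟨-, hw⟩
    have hnorm : ‖w‖ ≤ ‖z‖ + δ := by
      linarith [norm_le_norm_add_norm_sub' w z, mem_ball_iff_norm.1 hw]
    have hM : 1 ≤ M * ENNReal.ofReal (exp (-t * ‖w‖)) := by
      rw [← ENNReal.ofReal_mul (exp_nonneg _), ← exp_add]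
      exact ENNReal.one_le_ofReal.2 (one_le_exp (by nlinarith))
    calc ‖f w‖ₑ ^ 2 = 1 * ‖f w‖ₑ ^ 2 := (one_mul _).symm
      _ ≤ M * ENNReal.ofReal (exp (-t * ‖w‖)) * ‖f w‖ₑ ^ 2 := by gcongr
      _ = _ := by rw [enorm_eq_nnnorm]; ring
  have hfz : ENNReal.ofReal (‖f z‖ ^ 2) ≤ ENNReal.ofReal (C * exp (t * (‖z‖ + δ))) := calc
    ENNReal.ofReal (‖f z‖ ^ 2) = ‖f z‖ₑ ^ 2 := by
      rw [ENNReal.ofReal_pow (norm_nonneg _), ofReal_norm]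
    _ ≤ ENNReal.ofReal C * ∫⁻ w in G ∩ ball z δ, ‖f w‖ₑ ^ 2 := hbound f (hf.mono inter_subset_left)
    _ ≤ ENNReal.ofReal C * ∫⁻ w in G ∩ ball z δ,
          M * ((‖f w‖₊ : ENNReal) ^ 2 * ENNReal.ofReal (exp (-t * ‖w‖))) := by
      gcongr ENNReal.ofReal C * ?_
      exact setLIntegral_mono' (hG.inter isOpen_ball).measurableSet hweight
    _ ≤ ENNReal.ofReal C * (M * ∫⁻ w in G,
          (‖f w‖₊ : ENNReal) ^ 2 * ENNReal.ofReal (exp (-t * ‖w‖))) := by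
      rw [lintegral_const_mul' _ _ ENNReal.ofReal_ne_top]
      gcongr ENNReal.ofReal C * (M * ?_)
      exact lintegral_mono_set inter_subset_left
    _ ≤ ENNReal.ofReal C * (M * 1) := by gcongr
    _ = ENNReal.ofReal (C * exp (t * (‖z‖ + δ))) := by
      rw [mul_one, ENNReal.ofReal_mul hC.le]
  exact (ENNReal.ofReal_le_ofReal_iff (by positivity)).1 hfz

theorem tendsto_const_mul_exp_mul_rpow_one_div {C : ℝ} (hC : 0 < C) (L : ℝ) :
    Tendsto (fun t ↦ (C * exp (t * L)) ^ (1 / t)) atTop (𝓝 (exp L)) := by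
  have hlim : Tendsto (fun t : ℝ ↦ C ^ (1 / t) * exp L) atTop (𝓝 (exp L)) := by
    have hpow := ((continuousAt_const_rpow hC.ne').tendsto).comp
      (tendsto_inv_atTop_zero.congr fun t ↦ (one_div t).symm)
    simpa using hpow.mul_const (exp L)
  refine hlim.congr' ((eventually_gt_atTop 0).mono fun t ht ↦ ?_)
  show C ^ (1 / t) * exp L = (C * exp (t * L)) ^ (1 / t)
  rw [mul_rpow hC.le (exp_nonneg _), ← exp_mul, mul_comm t L, mul_assoc, mul_one_div_cancel ht.ne',
    mul_one]

theorem tendsto_rpow_one_div_of_exp_bounds {S : ℝ → ℝ} {L a : ℝ} (ha : 0 < a)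
    (hlow : ∀ᶠ t in atTop, a * exp (t * L) ≤ S t)
    (hup : ∀ δ > 0, ∃ C > 0, ∀ᶠ t in atTop, S t ≤ C * exp (t * (L + δ))) :
    Tendsto (fun t ↦ S t ^ (1 / t)) atTop (𝓝 (exp L)) := by
  refine tendsto_order.2 ⟨fun b hb ↦ ?_, fun b hb ↦ ?_⟩
  · filter_upwards [(tendsto_const_mul_exp_mul_rpow_one_div ha L).eventually (lt_mem_nhds hb),
      hlow, eventually_gt_atTop 0] with t hbt hSt ht
    exact hbt.trans_le (rpow_le_rpow (by positivity) hSt (by positivity))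
  · have hL : L < log b := (lt_log_iff_exp_lt ((exp_pos L).trans hb)).2 hb
    obtain ⟨C, hC, hSC⟩ := hup ((log b - L) / 2) (by linarith)
    have hb' : exp (L + (log b - L) / 2) < b := by
      calc exp (L + (log b - L) / 2) < exp (log b) := exp_lt_exp.2 (by linarith)
        _ = b := exp_log ((exp_pos L).trans hb)
    filter_upwards [(tendsto_const_mul_exp_mul_rpow_one_div hC _).eventually (gt_mem_nhds hb'),
      hlow, hSC, eventually_gt_atTop 0] with t hbt hlowt hSt ht
    have hS0 : 0 ≤ S t := (mul_pos ha (exp_pos _)).le.trans hlowt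
    exact (rpow_le_rpow hS0 hSt (by positivity)).trans_lt hbt

theorem weighted_bergman_diagonal_asymptotics_general (n : ℕ)
    (G : Set (EuclideanSpace ℂ (Fin n))) (hG : IsOpen G)
    (hGb : Bornology.IsBounded G)
    (z : EuclideanSpace ℂ (Fin n)) (hz : z ∈ G) :
    Tendsto
      (fun t : ℝ =>
        (sSup {s : ℝ | ∃ f : EuclideanSpace ℂ (Fin n) → ℂ,
          DifferentiableOn ℂ f G ∧
          (∫⁻ w in G, (‖f w‖₊ : ENNReal) ^ 2 *
            ENNReal.ofReal (Real.exp (-t * ‖w‖))) ≤ 1 ∧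
          s = ‖f z‖ ^ 2}) ^ (1 / t))
      atTop (nhds (Real.exp ‖z‖)) := by
  change Tendsto (fun t ↦ sSup (weightedBergmanValues G t z) ^ (1 / t)) atTop (𝓝 (exp ‖z‖))
  have h0 : volume G ≠ 0 := hG.measure_ne_zero volume ⟨z, hz⟩
  have htop : volume G ≠ ⊤ := hGb.measure_lt_top.ne
  have hmem : ∀ t ≥ 0, (volume G).toReal⁻¹ * exp (t * ‖z‖) ∈ weightedBergmanValues G t z :=
    fun t ht ↦ inv_volume_mul_exp_mem_weightedBergmanValues h0 htop ht z
  refine tendsto_rpow_one_div_of_exp_bounds (inv_pos.2 (ENNReal.toReal_pos h0 htop)) ?_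
    fun δ hδ ↦ ?_
  · obtain ⟨C, -, hC⟩ := exists_forall_mem_weightedBergmanValues_le hG hz one_pos
    filter_upwards [eventually_ge_atTop 0] with t ht
    exact le_csSup ⟨_, hC t ht⟩ (hmem t ht)
  · obtain ⟨C, hC0, hC⟩ := exists_forall_mem_weightedBergmanValues_le hG hz hδ
    exact ⟨C, hC0, (eventually_ge_atTop 0).mono fun t ht ↦ csSup_le ⟨_, hmem t ht⟩ (hC t ht)⟩

/-- Engliš-type asymptotics for the weighted Bergman kernel on the diagonal:
if `G ⊆ ℂⁿ` is a nonempty bounded open set, `z ∈ G`, and for `t > 0`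
`S t` denotes the supremum of `|f z|²` over holomorphic `f` on `G` with
`∫_G |f|² e^{-t‖w‖} dV ≤ 1`, then `S t ^ (1/t) → e^{‖z‖}` as `t → ∞`. -/
theorem weighted_bergman_diagonal_asymptotics (n : ℕ)
    (G : Set (EuclideanSpace ℂ (Fin n))) (hG : IsOpen G)
    (hGb : Bornology.IsBounded G) (hGne : G.Nonempty)
    (z : EuclideanSpace ℂ (Fin n)) (hz : z ∈ G) :
    Tendsto
      (fun t : ℝ =>
        (sSup {s : ℝ | ∃ f : EuclideanSpace ℂ (Fin n) → ℂ,
          DifferentiableOn ℂ f G ∧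
          (∫⁻ w in G, (‖f w‖₊ : ENNReal) ^ 2 *
            ENNReal.ofReal (Real.exp (-t * ‖w‖))) ≤ 1 ∧
          s = ‖f z‖ ^ 2}) ^ (1 / t))
      atTop (nhds (Real.exp ‖z‖)) :=
  weighted_bergman_diagonal_asymptotics_general n G hG hGb z hz
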